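/- arXiv:1511.04471 — 2 statements merged into one kernel-verified Lean document; each statement's English description precedes it below -/
import Mathlib

section
/- Let A be a matrix in SL(3,ℤ) (integer entries, determinant 1) whose characteristic polynomial has an irrational real root. Then the three eigenvalues of A (over ℂ, counted with multiplicity) are pairwise distinct. -/
/-!
The characteristic polynomial `p` of `A` has degree 3. An irrational root `r` has a rational
minimal polynomial `m` of degree at least 2 dividing `p`, so `p = m * c` with `deg c ≤ 1`.
Then `c` is squarefree and prime to the irreducible `m`, hence `p` is squarefree, thus separable
over the perfect field `ℚ`, and its complex roots are simple.
-/

open Polynomial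

namespace Polynomial

variable {K : Type*} [Field K]

theorem squarefree_of_natDegree_le_one {c : K[X]} (hc : c ≠ 0) (hdeg : c.natDegree ≤ 1) :
    Squarefree c := by
  rcases Nat.le_one_iff_eq_zero_or_eq_one.mp hdeg with h | h
  · exact (isUnit_iff_degree_eq_zero.mpr (by rw [degree_eq_natDegree hc, h]; rfl)).squarefree
  · exact (irreducible_of_degree_eq_one (by rw [degree_eq_natDegree hc, h]; rfl)).squarefree

theorem squarefree_of_irreducible_dvd_of_natDegree_le_succ {p m : K[X]} (hp : p ≠ 0)
    (hm : Irreducible m) (hmp : m ∣ p) (hm2 : 2 ≤ m.natDegree)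
    (hdeg : p.natDegree ≤ m.natDegree + 1) : Squarefree p := by
  obtain ⟨c, rfl⟩ := hmp
  have hc : c ≠ 0 := right_ne_zero_of_mul hp
  have hcdeg : c.natDegree ≤ 1 := by
    rw [natDegree_mul hm.ne_zero hc] at hdeg
    omega
  have hmc : ¬m ∣ c := fun h => by
    have := natDegree_le_of_dvd h hc
    omega
  exact squarefree_mul_iff.mpr
    ⟨hm.isRelPrime_iff_not_dvd.mpr hmc, hm.squarefree, squarefree_of_natDegree_le_one hc hcdeg⟩

end Polynomial

theorem Irrational.two_le_natDegree_minpoly {r : ℝ} (hr : Irrational r) (hint : IsIntegral ℚ r) :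
    2 ≤ (minpoly ℚ r).natDegree := by
  have hpos := minpoly.natDegree_pos hint
  have hne : (minpoly ℚ r).natDegree ≠ 1 := fun h => by
    have hdeg : (minpoly ℚ r).degree = 1 := by
      rw [degree_eq_natDegree (minpoly.ne_zero hint), h]; rfl
    exact hr (minpoly.degree_eq_one_iff.mp hdeg)
  omega

theorem Polynomial.squarefree_of_natDegree_le_three_of_aeval_irrational {p : ℚ[X]} (hp : p ≠ 0)
    (hdeg : p.natDegree ≤ 3) {r : ℝ} (hr : Irrational r) (hroot : aeval r p = 0) :
    Squarefree p := by
  have hint : IsIntegral ℚ r := isAlgebraic_iff_isIntegral.mp ⟨p, hp, hroot⟩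
  have hm2 := hr.two_le_natDegree_minpoly hint
  exact squarefree_of_irreducible_dvd_of_natDegree_le_succ hp (minpoly.irreducible hint)
    (minpoly.dvd ℚ r hroot) hm2 (by omega)

theorem sl3_irrational_root_distinct_eigenvalues_general
    (A : Matrix (Fin 3) (Fin 3) ℤ)
    (hroot : ∃ r : ℝ, Irrational r ∧
      Polynomial.aeval r (A.charpoly.map (Int.castRingHom ℝ)) = 0) :
    ((A.charpoly.map (Int.castRingHom ℂ)).roots).Nodup := by
  obtain ⟨r, hr, hroot⟩ := hroot
  set pQ : ℚ[X] := A.charpoly.map (algebraMap ℤ ℚ)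
  have hpQ : pQ ≠ 0 := (A.charpoly_monic.map _).ne_zero
  have hdeg : pQ.natDegree ≤ 3 :=
    (natDegree_map_le).trans (by simp [Matrix.charpoly_natDegree_eq_dim])
  have hrootQ : aeval r pQ = 0 := by
    rwa [aeval_map_algebraMap, ← aeval_map_algebraMap ℝ, algebraMap_int_eq]
  have hsep : pQ.Separable := PerfectField.separable_iff_squarefree.mpr
    (squarefree_of_natDegree_le_three_of_aeval_irrational hpQ hdeg hr hrootQ)
  have hmap : pQ.map (algebraMap ℚ ℂ) = A.charpoly.map (Int.castRingHom ℂ) := by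
    rw [map_map, ← algebraMap_int_eq, ← IsScalarTower.algebraMap_eq]
  exact hmap ▸ nodup_roots hsep.map

theorem sl3_irrational_root_distinct_eigenvalues
    (A : Matrix (Fin 3) (Fin 3) ℤ) (hdet : A.det = 1)
    (hroot : ∃ r : ℝ, Irrational r ∧
      Polynomial.aeval r (A.charpoly.map (Int.castRingHom ℝ)) = 0) :
    ((A.charpoly.map (Int.castRingHom ℂ)).roots).Nodup :=
  sl3_irrational_root_distinct_eigenvalues_general A hroot
end

section
/- Let A : ℝᵈ → ℝᵈ be an invertible linear map with ‖A⁻¹‖ < 1, and let f : ℝᵈ → ℝᵈ be a bijection such that sup_x ‖f(x) − A(x)‖ < ∞. Then on the complete metric space Q = { h : ℝᵈ → ℝᵈ bounded-distance-from-identity functions } with metric D(h₁,h₂) = sup_x ‖h₁(x) − h₂(x)‖, the map G(h) = A⁻¹ ∘ h ∘ f is a well-defined contraction with constant ‖A⁻¹‖ < 1, and hence has a unique fixed point H satisfying H ∘ f = A ∘ H and sup_x ‖H(x) − x‖ < ∞. -/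
open scoped ENNReal
set_option maxHeartbeats 1000000


theorem franks_semiconjugacy_contraction
    (d : ℕ) (A : EuclideanSpace ℝ (Fin d) ≃L[ℝ] EuclideanSpace ℝ (Fin d))
    (hA : ‖(A.symm : EuclideanSpace ℝ (Fin d) →L[ℝ] EuclideanSpace ℝ (Fin d))‖ < 1)
    (f : EuclideanSpace ℝ (Fin d) → EuclideanSpace ℝ (Fin d))
    (hf : Function.Bijective f)
    (hfa : ∃ c : ℝ, ∀ x, ‖f x - A x‖ ≤ c) :
    -- the map G h = A⁻¹ ∘ h ∘ f is well defined on bounded-distance-from-identity maps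
    (∀ h : EuclideanSpace ℝ (Fin d) → EuclideanSpace ℝ (Fin d),
      (∃ C : ℝ, ∀ x, ‖h x - x‖ ≤ C) →
      ∃ C : ℝ, ∀ x, ‖A.symm (h (f x)) - x‖ ≤ C) ∧
    -- G is a contraction with constant ‖A⁻¹‖ < 1 for the sup metric
    (∀ h₁ h₂ : EuclideanSpace ℝ (Fin d) → EuclideanSpace ℝ (Fin d), ∀ C : ℝ,
      (∀ x, ‖h₁ x - h₂ x‖ ≤ C) →
      ∀ x, ‖A.symm (h₁ (f x)) - A.symm (h₂ (f x))‖ ≤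
        ‖(A.symm : EuclideanSpace ℝ (Fin d) →L[ℝ] EuclideanSpace ℝ (Fin d))‖ * C) ∧
    -- unique fixed point: the semiconjugacy H
    (∃! H : EuclideanSpace ℝ (Fin d) → EuclideanSpace ℝ (Fin d),
      (∃ C : ℝ, ∀ x, ‖H x - x‖ ≤ C) ∧ ∀ x, H (f x) = A (H x)) := by
  set A' : EuclideanSpace ℝ (Fin d) →L[ℝ] EuclideanSpace ℝ (Fin d) :=
    (A.symm : EuclideanSpace ℝ (Fin d) →L[ℝ] EuclideanSpace ℝ (Fin d)) with hA'
  obtain ⟨c, hc⟩ := hfa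
  have hc0 : 0 ≤ c := le_trans (norm_nonneg _) (hc 0)
  have hAn : (0:ℝ) ≤ ‖A'‖ := norm_nonneg _
  -- basic estimate
  have key1 : ∀ (h : EuclideanSpace ℝ (Fin d) → EuclideanSpace ℝ (Fin d)) (C : ℝ), (∀ x, ‖h x - x‖ ≤ C) →
      ∀ x, ‖A.symm (h (f x)) - x‖ ≤ ‖A'‖ * (C + c) := by
    intro h C hC x
    have e1 : A.symm (h (f x)) - x = A' (h (f x) - A x) := by
      simp [A', map_sub]
    rw [e1]
    calc ‖A' (h (f x) - A x)‖ ≤ ‖A'‖ * ‖h (f x) - A x‖ := A'.le_opNorm _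
      _ ≤ ‖A'‖ * (C + c) := by
          refine mul_le_mul_of_nonneg_left ?_ hAn
          calc ‖h (f x) - A x‖ = ‖(h (f x) - f x) + (f x - A x)‖ := by rw [sub_add_sub_cancel]
            _ ≤ ‖h (f x) - f x‖ + ‖f x - A x‖ := norm_add_le _ _
            _ ≤ C + c := add_le_add (hC _) (hc _)
  refine ⟨?_, ?_, ?_⟩
  · rintro h ⟨C, hC⟩
    exact ⟨‖A'‖ * (C + c), key1 h C hC⟩
  · intro h₁ h₂ C hC x
    have e1 : A.symm (h₁ (f x)) - A.symm (h₂ (f x)) = A' (h₁ (f x) - h₂ (f x)) := by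
      simp [A', map_sub]
    rw [e1]
    calc ‖A' (h₁ (f x) - h₂ (f x))‖ ≤ ‖A'‖ * ‖h₁ (f x) - h₂ (f x)‖ := A'.le_opNorm _
      _ ≤ ‖A'‖ * C := mul_le_mul_of_nonneg_left (hC (f x)) hAn
  · -- existence via Banach fixed point on lp (fun _ : EuclideanSpace ℝ (Fin d) => EuclideanSpace ℝ (Fin d)) ∞
    haveI : Fact ((1:ℝ≥0∞) ≤ ∞) := ⟨le_top⟩
    have mem : ∀ u : lp (fun _ : EuclideanSpace ℝ (Fin d) => EuclideanSpace ℝ (Fin d)) ∞,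
        Memℓp (fun x => A.symm (f x + u (f x)) - x) ∞ := by
      intro u
      apply memℓp_infty
      refine ⟨‖A'‖ * (‖u‖ + c), ?_⟩
      rintro - ⟨x, rfl⟩
      refine key1 (fun y => y + u y) ‖u‖ (fun y => by
        simpa using lp.norm_apply_le_norm ENNReal.top_ne_zero u y) x
    set T : lp (fun _ : EuclideanSpace ℝ (Fin d) => EuclideanSpace ℝ (Fin d)) ∞ → lp (fun _ : EuclideanSpace ℝ (Fin d) => EuclideanSpace ℝ (Fin d)) ∞ :=
      fun u => ⟨fun x => A.symm (f x + u (f x)) - x, mem u⟩ with hT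
    have hTlip : LipschitzWith ‖A'‖₊ T := by
      intro u v
      rw [edist_dist, edist_dist, dist_eq_norm, dist_eq_norm]
      have hle : ‖T u - T v‖ ≤ ‖A'‖ * ‖u - v‖ := by
        apply lp.norm_le_of_forall_le (mul_nonneg hAn (norm_nonneg _))
        intro x
        have e1 : (T u - T v : lp (fun _ : EuclideanSpace ℝ (Fin d) => EuclideanSpace ℝ (Fin d)) ∞) x
            = A' ((u - v : lp (fun _ : EuclideanSpace ℝ (Fin d) => EuclideanSpace ℝ (Fin d)) ∞) (f x)) := by
          simp [T, A', map_sub, map_add]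
          show A.symm (f x) + A.symm (u (f x)) - x - (A.symm (f x) + A.symm (v (f x)) - x) = A.symm (u (f x)) - A.symm (v (f x))
          abel
        rw [e1]
        calc ‖A' ((u - v : lp (fun _ : EuclideanSpace ℝ (Fin d) => EuclideanSpace ℝ (Fin d)) ∞) (f x))‖
            ≤ ‖A'‖ * ‖(u - v : lp (fun _ : EuclideanSpace ℝ (Fin d) => EuclideanSpace ℝ (Fin d)) ∞) (f x)‖ := A'.le_opNorm _
          _ ≤ ‖A'‖ * ‖u - v‖ := mul_le_mul_of_nonneg_left
              (lp.norm_apply_le_norm ENNReal.top_ne_zero _ _) hAn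
      calc ENNReal.ofReal ‖T u - T v‖ ≤ ENNReal.ofReal (‖A'‖ * ‖u - v‖) :=
            ENNReal.ofReal_le_ofReal hle
        _ = (‖A'‖₊ : ℝ≥0∞) * ENNReal.ofReal ‖u - v‖ := by
            rw [ENNReal.ofReal_mul hAn, ← coe_nnnorm A', ENNReal.ofReal_coe_nnreal]
    have hcontr : ContractingWith ‖A'‖₊ T := ⟨by exact_mod_cast hA, hTlip⟩
    obtain ⟨u, hu⟩ : ∃ u, Function.IsFixedPt T u :=
      ⟨hcontr.fixedPoint T, hcontr.fixedPoint_isFixedPt⟩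
    have hufix : ∀ x, A.symm (f x + u (f x)) - x = u x := by
      intro x
      have := congrArg (fun w : lp (fun _ : EuclideanSpace ℝ (Fin d) => EuclideanSpace ℝ (Fin d)) ∞ => w x) hu
      simpa [T] using this
    refine ⟨fun x => x + u x, ⟨⟨‖u‖, fun x => by
      simpa using lp.norm_apply_le_norm ENNReal.top_ne_zero u x⟩, ?_⟩, ?_⟩
    · intro x
      have h1 : A.symm (f x + u (f x)) = x + u x :=
        (sub_eq_iff_eq_add.mp (hufix x)).trans (add_comm _ _)
      calc f x + u (f x) = A (A.symm (f x + u (f x))) := by simp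
        _ = A (x + u x) := by rw [h1]
    · -- uniqueness
      rintro H ⟨⟨C, hC⟩, hHconj⟩
      have hbound : ∀ x, ‖H x - (x + u x)‖ ≤ C + ‖u‖ := by
        intro x
        calc ‖H x - (x + u x)‖ = ‖(H x - x) + (-(u x))‖ := by rw [← sub_eq_add_neg, sub_sub]
          _ ≤ ‖H x - x‖ + ‖u x‖ := by
              simpa using norm_add_le (H x - x) (-(u x))
          _ ≤ C + ‖u‖ := add_le_add (hC x)
              (by simpa using lp.norm_apply_le_norm ENNReal.top_ne_zero u x)
      have hiter : ∀ n : ℕ, ∀ x, ‖H x - (x + u x)‖ ≤ ‖A'‖ ^ n * (C + ‖u‖) := by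
        intro n
        induction n with
        | zero => intro x; simpa only [pow_zero, one_mul] using hbound x
        | succ n ih =>
          intro x
          have h1 : H x = A.symm (H (f x)) := by
            rw [hHconj x]; simp
          have h2 : x + u x = A.symm (f x + u (f x)) :=
            ((sub_eq_iff_eq_add.mp (hufix x)).trans (add_comm _ _)).symm
          rw [h1, h2]
          have e1 : A.symm (H (f x)) - A.symm (f x + u (f x))
              = A' (H (f x) - (f x + u (f x))) := by simp [A', map_sub]
          rw [e1]
          calc ‖A' (H (f x) - (f x + u (f x)))‖
              ≤ ‖A'‖ * ‖H (f x) - (f x + u (f x))‖ := A'.le_opNorm _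
            _ ≤ ‖A'‖ * (‖A'‖ ^ n * (C + ‖u‖)) :=
                mul_le_mul_of_nonneg_left (ih (f x)) hAn
            _ = ‖A'‖ ^ (n+1) * (C + ‖u‖) := by ring
      funext x
      have htend : Filter.Tendsto (fun n : ℕ => ‖A'‖ ^ n * (C + ‖u‖))
          Filter.atTop (nhds 0) := by
        have := (tendsto_pow_atTop_nhds_zero_of_lt_one hAn hA).mul_const (C + ‖u‖)
        simpa only [zero_mul] using this
      have h0 : ‖H x - (x + u x)‖ ≤ 0 := ge_of_tendsto' htend (fun n => hiter n x)
      exact sub_eq_zero.mp (norm_eq_zero.mp (le_antisymm h0 (norm_nonneg _)))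
end
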